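/- Corollary (Danan–Gajdos–Hill–Tallon direction): If for each i ∈ N ∪ {0}, ≿ᵢ is a Bewley preference (uᵢ, Pᵢ) with uᵢ unbounded affine and Pᵢ ⊆ Δ(S) nonempty closed convex, Preference Diversity holds, and Standard Pareto holds, then there exist α ∈ ℝⁿ₊ and β ∈ ℝ such that u₀ = Σᵢ αᵢuᵢ + β and P₀ ⊆ ⋂_{i: αᵢ>0} Pᵢ. -/
import Mathlib


open Finset ENNReal

/-- `p` is a probability distribution on the finite state space `S`. -/
def IsProb {S : Type*} [Fintype S] (p : S → ℝ) : Prop :=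
  (∀ s, 0 ≤ p s) ∧ ∑ s, p s = 1

/-- `u` is an affine function. -/
def IsAffineFn {X : Type*} [AddCommGroup X] [Module ℝ X] (u : X → ℝ) : Prop :=
  ∀ x y : X, ∀ t : ℝ, u (t • x + (1 - t) • y) = t * u x + (1 - t) * u y

/-- `u` is unbounded. -/
def UnboundedFn {X : Type*} (u : X → ℝ) : Prop :=
  ∀ M : ℝ, ∃ x, M < |u x|

/-- The variational Bewley preference induced by `(u, c)`:
`f ≿ g` iff `∑ p(s)u(f(s)) + c(p) ≥ ∑ p(s)u(g(s))` for all `p ∈ Δ(S)`. -/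
def VBPref {S : Type*} [Fintype S] {X : Type*} (u : X → ℝ)
    (c : (S → ℝ) → ℝ≥0∞) (f g : S → X) : Prop :=
  ∀ p : S → ℝ, IsProb p →
    ((∑ s, p s * u (g s) : ℝ) : EReal) ≤ ((∑ s, p s * u (f s) : ℝ) : EReal) + (c p : EReal)

/-- The Bewley preference induced by `(u, P)`. -/
def BewPref {S : Type*} [Fintype S] {X : Type*} (u : X → ℝ)
    (P : Set (S → ℝ)) (f g : S → X) : Prop :=
  ∀ p ∈ P, (∑ s, p s * u (g s)) ≤ ∑ s, p s * u (f s)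

/-- `min_{p ∈ Δ(S)} c(p) = 0` (the minimum value 0 is attained). -/
def MinZero {S : Type*} [Fintype S] (c : (S → ℝ) → ℝ≥0∞) : Prop :=
  ∃ p : S → ℝ, IsProb p ∧ c p = 0

/-- Convexity of the perception function `c` on the simplex. -/
def ConvexPerc {S : Type*} [Fintype S] (c : (S → ℝ) → ℝ≥0∞) : Prop :=
  ∀ p q : S → ℝ, IsProb p → IsProb q → ∀ t : ℝ, 0 ≤ t → t ≤ 1 →
    c (fun s => t * p s + (1 - t) * q s) ≤
      ENNReal.ofReal t * c p + ENNReal.ofReal (1 - t) * c q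

section Aux

lemma sum_mul_const' {S : Type*} [Fintype S] {p : S → ℝ} (hp : IsProb p) (C : ℝ) :
    ∑ s, p s * C = C := by
  rw [← Finset.sum_mul, hp.2, one_mul]

lemma affine_linear {X : Type*} [AddCommGroup X] [Module ℝ X] {u : X → ℝ}
    (h : IsAffineFn u) : ∃ L : X →ₗ[ℝ] ℝ, ∀ x, u x = L x + u 0 := by
  have hsmul : ∀ (t : ℝ) (x : X), u (t • x) = t * u x + (1 - t) * u 0 := by
    intro t x
    have := h x 0 t
    simpa using this
  refine ⟨{ toFun := fun x => u x - u 0, map_add' := ?_, map_smul' := ?_ }, ?_⟩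
  · intro a b
    have h2 : u ((2:ℝ) • ((1/2 : ℝ) • (a + b))) = 2 * u ((1/2 : ℝ) • (a+b)) + (1 - 2) * u 0 :=
      hsmul 2 _
    have h3 : u ((1/2 : ℝ) • a + (1 - (1/2:ℝ)) • b) = (1/2) * u a + (1 - 1/2) * u b := h a b (1/2)
    have he : (2:ℝ) • ((1/2 : ℝ) • (a + b)) = a + b := by
      rw [smul_smul]; norm_num
    have he2 : (1/2 : ℝ) • (a + b) = (1/2 : ℝ) • a + (1 - (1/2:ℝ)) • b := by
      rw [smul_add]; norm_num
    rw [he, he2, h3] at h2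
    rw [h2]; ring
  · intro t x
    simp only [RingHom.id_apply, smul_eq_mul]
    rw [hsmul t x]; ring
  · intro x; simp

end Aux

theorem stmt10 {S : Type*} [Fintype S] {d n : ℕ} (hn : 2 ≤ n)
    (u : Fin n → EuclideanSpace ℝ (Fin d) → ℝ) (P : Fin n → Set (S → ℝ))
    (u0 : EuclideanSpace ℝ (Fin d) → ℝ) (P0 : Set (S → ℝ))
    (hu : ∀ i, IsAffineFn (u i)) (hub : ∀ i, UnboundedFn (u i))
    (hu0 : IsAffineFn u0) (hub0 : UnboundedFn u0)
    (hP : ∀ i, (P i).Nonempty ∧ IsClosed (P i) ∧ Convex ℝ (P i) ∧ ∀ p ∈ P i, IsProb p)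
    (hP0 : P0.Nonempty ∧ IsClosed P0 ∧ Convex ℝ P0 ∧ ∀ p ∈ P0, IsProb p)
    (hdiv : ∀ i, ∃ xb xu : EuclideanSpace ℝ (Fin d),
      u i xu < u i xb ∧ ∀ j, j ≠ i → u j xb = u j xu)
    (hpar : ∀ f g : S → EuclideanSpace ℝ (Fin d),
      (∀ i, BewPref (u i) (P i) f g) → BewPref u0 P0 f g) :
    ∃ (α : Fin n → ℝ) (β : ℝ), (∀ i, 0 ≤ α i) ∧
      (∀ x, u0 x = ∑ i, α i * u i x + β) ∧
      ∀ p ∈ P0, ∀ i, 0 < α i → p ∈ P i := by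
  classical
  choose L hL using fun i => affine_linear (hu i)
  obtain ⟨L0, hL0⟩ := affine_linear hu0
  have hli : ∀ i x, L i x = u i x - u i 0 := fun i x => by rw [hL i x]; ring
  have hl0 : ∀ x, L0 x = u0 x - u0 0 := fun x => by rw [hL0 x]; ring
  choose xb xu hdlt heqd using hdiv
  set w : Fin n → EuclideanSpace ℝ (Fin d) := fun i => xb i - xu i with hw
  have hdpos : ∀ i, 0 < L i (w i) := by
    intro i
    have he : L i (w i) = L i (xb i) - L i (xu i) := map_sub _ _ _
    rw [he, hli, hli]
    have := hdlt i
    linarith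
  have hzero : ∀ i j, i ≠ j → L i (w j) = 0 := by
    intro i j hij
    have he : L i (w j) = L i (xb j) - L i (xu j) := map_sub _ _ _
    rw [he, hli, hli]
    have := heqd j i hij
    linarith
  have hpc : ∀ z, (∀ i, 0 ≤ L i z) → 0 ≤ L0 z := by
    intro z hz
    have hbp : ∀ i, BewPref (u i) (P i) (fun _ => z)
        (fun _ => (0 : EuclideanSpace ℝ (Fin d))) := by
      intro i q hq
      have hq' := (hP i).2.2.2 q hq
      simp only
      rw [sum_mul_const' hq', sum_mul_const' hq']
      have h1 := hz i
      rw [hli i z] at h1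
      linarith
    obtain ⟨p0, hp0⟩ := hP0.1
    have h2 := hpar _ _ hbp p0 hp0
    rw [sum_mul_const' (hP0.2.2.2 p0 hp0), sum_mul_const' (hP0.2.2.2 p0 hp0)] at h2
    rw [hl0 z]
    linarith
  set α : Fin n → ℝ := fun i => L0 (w i) / L i (w i) with hα
  have hαnn : ∀ i, 0 ≤ α i := by
    intro i
    apply div_nonneg _ (hdpos i).le
    apply hpc
    intro j
    by_cases hji : j = i
    · subst hji; exact (hdpos j).le
    · rw [hzero j i hji]
  have key : ∀ z, L0 z = ∑ j, α j * L j z := by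
    intro z
    set z' : EuclideanSpace ℝ (Fin d) := z - ∑ j, (L j z / L j (w j)) • w j with hz'
    have hz'0 : ∀ i, L i z' = 0 := by
      intro i
      rw [hz', map_sub, map_sum]
      have hs : ∑ j, L i ((L j z / L j (w j)) • w j) = L i z := by
        rw [Finset.sum_eq_single i]
        · rw [map_smul, smul_eq_mul, div_mul_cancel₀ _ (hdpos i).ne']
        · intro j _ hji
          rw [map_smul, hzero i j (fun h => hji h.symm), smul_eq_mul, mul_zero]
        · intro h; exact absurd (Finset.mem_univ i) h
      rw [hs, sub_self]
    have h1 : 0 ≤ L0 z' := hpc z' (fun i => (hz'0 i).ge)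
    have h2 : 0 ≤ L0 (-z') := hpc (-z') (fun i => by rw [map_neg, hz'0 i, neg_zero])
    rw [map_neg] at h2
    have hz'' : L0 z' = 0 := le_antisymm (by linarith) h1
    have hsplit : L0 z = L0 z' + ∑ j, (L j z / L j (w j)) * L0 (w j) := by
      rw [hz', map_sub, map_sum]
      simp only [map_smul, smul_eq_mul]
      ring
    rw [hsplit, hz'', zero_add]
    apply Finset.sum_congr rfl
    intro j _
    rw [hα]
    ring
  refine ⟨α, u0 0 - ∑ j, α j * u j 0, hαnn, ?_, ?_⟩
  · intro x
    have kx := key x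
    rw [hl0 x] at kx
    have e1 : ∀ j, α j * L j x = α j * u j x - α j * u j 0 := fun j => by
      rw [hli]; ring
    rw [Finset.sum_congr rfl (fun j _ => e1 j), Finset.sum_sub_distrib] at kx
    linarith
  · intro p hp i hαi
    by_contra hpn
    obtain ⟨φ, c, hc1, hc2⟩ :=
      geometric_hahn_banach_point_closed (hP i).2.2.1 (hP i).2.1 hpn
    set lam : S → ℝ := fun s => φ (Pi.single s 1) with hlam
    have hφ : ∀ q : S → ℝ, φ q = ∑ s, q s * lam s := by
      intro q
      have hq : q = ∑ s, q s • (Pi.single s (1:ℝ) : S → ℝ) := by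
        funext t
        rw [Finset.sum_apply]
        simp [Pi.single_apply]
      nth_rewrite 1 [hq]
      rw [map_sum]
      refine Finset.sum_congr rfl (fun s _ => ?_)
      rw [map_smul, smul_eq_mul, hlam]
    set f : S → EuclideanSpace ℝ (Fin d) :=
      fun s => ((lam s - c) / L i (w i)) • w i with hf
    have huf : ∀ j s, u j (f s) = ((lam s - c) / L i (w i)) * L j (w i) + u j 0 := by
      intro j s
      rw [hL j (f s), hf]
      simp only [map_smul, smul_eq_mul]
    have hbp : ∀ j, BewPref (u j) (P j) f (fun _ => (0 : EuclideanSpace ℝ (Fin d))) := by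
      intro j q hq
      have hq' := (hP j).2.2.2 q hq
      simp only
      rw [sum_mul_const' hq']
      by_cases hji : j = i
      · subst hji
        have e1 : ∀ s, q s * u j (f s) = q s * lam s + q s * (u j 0 - c) := by
          intro s
          rw [huf j s, div_mul_cancel₀ _ (hdpos j).ne']
          ring
        rw [Finset.sum_congr rfl (fun s _ => e1 s), Finset.sum_add_distrib,
          sum_mul_const' hq', ← hφ q]
        have := hc2 q hq
        linarith
      · have e1 : ∀ s, q s * u j (f s) = q s * u j 0 := by
          intro s
          rw [huf j s, hzero j i hji]
          ring
        rw [Finset.sum_congr rfl (fun s _ => e1 s), sum_mul_const' hq']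
    have h0 := hpar f _ hbp p hp
    rw [sum_mul_const' (hP0.2.2.2 p hp)] at h0
    have huf0 : ∀ s, u0 (f s) = α i * (lam s - c) + u0 0 := by
      intro s
      rw [hL0 (f s), hf]
      simp only [map_smul, smul_eq_mul, hα]
      ring
    have e1 : ∀ s, p s * u0 (f s) = α i * (p s * lam s) + p s * (u0 0 - α i * c) := by
      intro s; rw [huf0 s]; ring
    rw [Finset.sum_congr rfl (fun s _ => e1 s), Finset.sum_add_distrib, ← Finset.mul_sum,
      sum_mul_const' (hP0.2.2.2 p hp), ← hφ p] at h0
    have hpos : 0 < α i * (c - φ p) := mul_pos hαi (by linarith)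
    linarith
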